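/- arXiv:1809.05416 — 2 statements merged into one kernel-verified Lean document; each statement's English description precedes it below -/
import Mathlib

section
/- Let p, q, t₁,…,t₈ ∈ ℂ∖{0} satisfy ∏_{j=1}^8 t_j = p²q², and suppose every multiplicative relation among t₁,…,t₈, p, q is induced by this balancing condition (i.e., ∏_{j=1}^8 t_j^{β_j} = p^m q^n with integers β_j, m, n forces β₁ = ⋯ = β₈ = β and m = n = 2β for some β ∈ ℤ). Let c ∈ ℂ∖{0} with c² = t₆·t₇, set ε_j := q/(c·t_j) for j = 1,…,5, ε₆ := p⁴·c·t₈, ε₇ := c/(q·t₈), and ε₈ := q·ε₇ = c/t₈. Then whenever α₁,…,α₈, m, n ∈ ℤ satisfy ∏_{j=1}^8 ε_j^{α_j} = p^m q^n, there exists α ∈ ℤ with α₁ = ⋯ = α₆ = α = n − α₈ and α₇ + α₈ = 2α = m. -/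
/-!
Squaring a relation `∏ εⱼ^{αⱼ} = pᵐ qⁿ` and substituting `c² = t₆ t₇` eliminates `c`, leaving
a relation among `t₁, …, t₈, p, q` alone. By hypothesis that relation is a power `β` of the
balancing condition; comparing exponents gives a linear system in the `αⱼ`, `m`, `n` whose
solutions are exactly the ones claimed.
-/

theorem t_relation_of_eps_relation {G : Type*} [CommGroup G]
    (p q c t₁ t₂ t₃ t₄ t₅ t₆ t₇ t₈ : G) (hc2 : c ^ 2 = t₆ * t₇)
    (α₁ α₂ α₃ α₄ α₅ α₆ α₇ α₈ m n : ℤ)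
    (h : (q / (c * t₁)) ^ α₁ * (q / (c * t₂)) ^ α₂ * (q / (c * t₃)) ^ α₃ *
      (q / (c * t₄)) ^ α₄ * (q / (c * t₅)) ^ α₅ * (p ^ 4 * c * t₈) ^ α₆ *
      (c / (q * t₈)) ^ α₇ * (c / t₈) ^ α₈ = p ^ m * q ^ n) :
    t₁ ^ (-(2 * α₁)) * t₂ ^ (-(2 * α₂)) * t₃ ^ (-(2 * α₃)) * t₄ ^ (-(2 * α₄)) *
      t₅ ^ (-(2 * α₅)) * t₆ ^ (α₆ + α₇ + α₈ - (α₁ + α₂ + α₃ + α₄ + α₅)) *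
      t₇ ^ (α₆ + α₇ + α₈ - (α₁ + α₂ + α₃ + α₄ + α₅)) * t₈ ^ (2 * (α₆ - α₇ - α₈)) =
    p ^ (2 * m - 8 * α₆) * q ^ (2 * n - 2 * (α₁ + α₂ + α₃ + α₄ + α₅) + 2 * α₇) := by
  apply Additive.ofMul.injective
  have hA := congrArg Additive.ofMul h
  have hc2A := congrArg Additive.ofMul hc2
  simp only [ofMul_mul, ofMul_zpow, ofMul_div, ofMul_pow] at hA hc2A ⊢
  linear_combination (norm := module)
    (2 : ℤ) • hA - (α₆ + α₇ + α₈ - (α₁ + α₂ + α₃ + α₄ + α₅)) • hc2A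

theorem elliptic_hypergeometric_multiplicative_relations_caseB_general
    (p q t₁ t₂ t₃ t₄ t₅ t₆ t₇ t₈ c : ℂ)
    (hp : p ≠ 0) (hq : q ≠ 0)
    (ht₁ : t₁ ≠ 0) (ht₂ : t₂ ≠ 0) (ht₃ : t₃ ≠ 0) (ht₄ : t₄ ≠ 0)
    (ht₅ : t₅ ≠ 0) (ht₆ : t₆ ≠ 0) (ht₇ : t₇ ≠ 0) (ht₈ : t₈ ≠ 0)
    (hc : c ≠ 0)
    (hrel : ∀ β₁ β₂ β₃ β₄ β₅ β₆ β₇ β₈ m n : ℤ,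
      t₁ ^ β₁ * t₂ ^ β₂ * t₃ ^ β₃ * t₄ ^ β₄ * t₅ ^ β₅ * t₆ ^ β₆ * t₇ ^ β₇ * t₈ ^ β₈
        = p ^ m * q ^ n →
      ∃ β : ℤ, β₁ = β ∧ β₂ = β ∧ β₃ = β ∧ β₄ = β ∧ β₅ = β ∧ β₆ = β ∧ β₇ = β ∧ β₈ = β ∧
        m = 2 * β ∧ n = 2 * β)
    (hc2 : c ^ 2 = t₆ * t₇)
    (ε₁ ε₂ ε₃ ε₄ ε₅ ε₆ ε₇ ε₈ : ℂ)
    (he₁ : ε₁ = q / (c * t₁)) (he₂ : ε₂ = q / (c * t₂)) (he₃ : ε₃ = q / (c * t₃))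
    (he₄ : ε₄ = q / (c * t₄)) (he₅ : ε₅ = q / (c * t₅))
    (he₆ : ε₆ = p ^ 4 * c * t₈) (he₇ : ε₇ = c / (q * t₈))
    (he₈' : ε₈ = c / t₈) :
    ∀ α₁ α₂ α₃ α₄ α₅ α₆ α₇ α₈ m n : ℤ,
      ε₁ ^ α₁ * ε₂ ^ α₂ * ε₃ ^ α₃ * ε₄ ^ α₄ * ε₅ ^ α₅ * ε₆ ^ α₆ * ε₇ ^ α₇ * ε₈ ^ α₈
        = p ^ m * q ^ n →
      ∃ α : ℤ, α₁ = α ∧ α₂ = α ∧ α₃ = α ∧ α₄ = α ∧ α₅ = α ∧ α₆ = α ∧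
        α = n - α₈ ∧ α₇ + α₈ = 2 * α ∧ m = 2 * α := by
  intro α₁ α₂ α₃ α₄ α₅ α₆ α₇ α₈ m n h
  subst he₁ he₂ he₃ he₄ he₅ he₆ he₇ he₈'
  lift p to ℂˣ using hp.isUnit
  lift q to ℂˣ using hq.isUnit
  lift c to ℂˣ using hc.isUnit
  lift t₁ to ℂˣ using ht₁.isUnit
  lift t₂ to ℂˣ using ht₂.isUnit
  lift t₃ to ℂˣ using ht₃.isUnit
  lift t₄ to ℂˣ using ht₄.isUnit
  lift t₅ to ℂˣ using ht₅.isUnit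
  lift t₆ to ℂˣ using ht₆.isUnit
  lift t₇ to ℂˣ using ht₇.isUnit
  lift t₈ to ℂˣ using ht₈.isUnit
  norm_cast at h hc2
  obtain ⟨β, h₁, h₂, h₃, h₄, h₅, h₆, h₇, h₈, hm, hn⟩ := hrel _ _ _ _ _ _ _ _ _ _ <| by
    exact_mod_cast t_relation_of_eps_relation p q c t₁ t₂ t₃ t₄ t₅ t₆ t₇ t₈ hc2
      α₁ α₂ α₃ α₄ α₅ α₆ α₇ α₈ m n h
  exact ⟨α₁, by omega, by omega, by omega, by omega, by omega, by omega, by omega, by omega,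
    by omega⟩

/-- **Lemma 3 of the paper, together with the remark following it.**  If every
multiplicative relation among `t₁, …, t₈, p, q` is induced by the balancing condition
`∏ tⱼ = p² q²`, and the parameters `ε₁, …, ε₈` are given by the reparametrization
`εⱼ = q/(c tⱼ)` for `j = 1, …, 5`, `ε₆ = p⁴ c t₈`, `ε₇ = c/(q t₈)`, `ε₈ = q ε₇ = c/t₈`
with `c² = t₆ t₇`, then every multiplicative relation `∏_{j=1}^8 εⱼ^{αⱼ} = pᵐ qⁿ`
satisfies `α₁ = ⋯ = α₆ = α = n - α₈` and `α₇ + α₈ = 2α = m` for some `α ∈ ℤ`. -/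
theorem elliptic_hypergeometric_multiplicative_relations_caseB
    (p q t₁ t₂ t₃ t₄ t₅ t₆ t₇ t₈ c : ℂ)
    (hp : p ≠ 0) (hq : q ≠ 0)
    (ht₁ : t₁ ≠ 0) (ht₂ : t₂ ≠ 0) (ht₃ : t₃ ≠ 0) (ht₄ : t₄ ≠ 0)
    (ht₅ : t₅ ≠ 0) (ht₆ : t₆ ≠ 0) (ht₇ : t₇ ≠ 0) (ht₈ : t₈ ≠ 0)
    (hc : c ≠ 0)
    (hbal : t₁ * t₂ * t₃ * t₄ * t₅ * t₆ * t₇ * t₈ = p ^ 2 * q ^ 2)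
    (hrel : ∀ β₁ β₂ β₃ β₄ β₅ β₆ β₇ β₈ m n : ℤ,
      t₁ ^ β₁ * t₂ ^ β₂ * t₃ ^ β₃ * t₄ ^ β₄ * t₅ ^ β₅ * t₆ ^ β₆ * t₇ ^ β₇ * t₈ ^ β₈
        = p ^ m * q ^ n →
      ∃ β : ℤ, β₁ = β ∧ β₂ = β ∧ β₃ = β ∧ β₄ = β ∧ β₅ = β ∧ β₆ = β ∧ β₇ = β ∧ β₈ = β ∧
        m = 2 * β ∧ n = 2 * β)
    (hc2 : c ^ 2 = t₆ * t₇)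
    (ε₁ ε₂ ε₃ ε₄ ε₅ ε₆ ε₇ ε₈ : ℂ)
    (he₁ : ε₁ = q / (c * t₁)) (he₂ : ε₂ = q / (c * t₂)) (he₃ : ε₃ = q / (c * t₃))
    (he₄ : ε₄ = q / (c * t₄)) (he₅ : ε₅ = q / (c * t₅))
    (he₆ : ε₆ = p ^ 4 * c * t₈) (he₇ : ε₇ = c / (q * t₈))
    (he₈ : ε₈ = q * ε₇) (he₈' : ε₈ = c / t₈) :
    ∀ α₁ α₂ α₃ α₄ α₅ α₆ α₇ α₈ m n : ℤ,
      ε₁ ^ α₁ * ε₂ ^ α₂ * ε₃ ^ α₃ * ε₄ ^ α₄ * ε₅ ^ α₅ * ε₆ ^ α₆ * ε₇ ^ α₇ * ε₈ ^ α₈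
        = p ^ m * q ^ n →
      ∃ α : ℤ, α₁ = α ∧ α₂ = α ∧ α₃ = α ∧ α₄ = α ∧ α₅ = α ∧ α₆ = α ∧
        α = n - α₈ ∧ α₇ + α₈ = 2 * α ∧ m = 2 * α :=
  elliptic_hypergeometric_multiplicative_relations_caseB_general p q t₁ t₂ t₃ t₄ t₅ t₆ t₇ t₈ c hp hq
    ht₁ ht₂ ht₃ ht₄ ht₅ ht₆ ht₇ ht₈ hc hrel hc2 ε₁ ε₂ ε₃ ε₄ ε₅ ε₆ ε₇ ε₈ he₁ he₂ he₃ he₄ he₅ he₆ he₇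
    he₈'
end

section
/- Let p, r ∈ ℂ∖{0} with |p| < 1, |r| ≠ 1, and p^ℤ ∩ r^ℤ = {1}. Let f : ℂ → ℂ be meromorphic on ℂ∖{0} and suppose f(p·z) = f(z) and f(r·z) = f(z) for all z outside some discrete subset of ℂ∖{0}. Then f is constant off a discrete set: there exist c ∈ ℂ and a discrete subset Σ of ℂ∖{0} such that f(z) = c for all z ∈ (ℂ∖{0})∖Σ. (This expresses that the field of σ-constants of the difference field of p-elliptic meromorphic functions with σ(f)(z) = f(rz) is ℂ.) -/
/-!
Pick `z₀` whose whole orbit `p^ℤ r^ℤ z₀` avoids the (countable) exceptional sets; then `f` equals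
`f z₀` on this orbit. Moving `r^n z₀` into the annulus `|p| ≤ |z| ≤ 1` by a power of `p` gives,
because `p^ℤ ∩ r^ℤ = {1}`, infinitely many distinct orbit points in a compact set avoiding `0`, so
they accumulate at some `w ≠ 0`. The meromorphic function `f - f z₀` then vanishes on a punctured
neighbourhood of `w`, hence, `ℂ ∖ {0}` being connected, on a punctured neighbourhood of every
point of `ℂ ∖ {0}`; so `f = f z₀` off a discrete set.
-/

/-- `S` is a discrete subset of `ℂ ∖ {0}`: it avoids `0` and each of its points is
isolated in `S`. -/
def DiscreteIn (S : Set ℂ) : Prop :=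
  S ⊆ {z : ℂ | z ≠ 0} ∧ ∀ z ∈ S, ∃ ε > 0, ∀ w ∈ S, w ≠ z → ε ≤ dist w z

open Filter Topology

theorem DiscreteIn.countable {S : Set ℂ} (hS : DiscreteIn S) : S.Countable := by
  refine (HereditarilyLindelofSpace.isLindelof S).countable_of_isDiscrete ?_
  refine isDiscrete_iff_forall_mem_exists_isOpen.2 fun z hz => ?_
  obtain ⟨ε, hε, hsep⟩ := hS.2 z hz
  refine ⟨Metric.ball z ε, Metric.isOpen_ball, Set.eq_singleton_iff_unique_mem.2
    ⟨⟨Metric.mem_ball_self hε, hz⟩, fun w ⟨hwz, hw⟩ => ?_⟩⟩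
  by_contra hne
  exact (hsep w hw hne).not_gt hwz

theorem discreteIn_setOf_ne_of_eventually_eq {f : ℂ → ℂ} {c : ℂ}
    (h : ∀ z ≠ 0, ∀ᶠ w in 𝓝[≠] z, f w = c) : DiscreteIn {z | z ≠ 0 ∧ f z ≠ c} := by
  refine ⟨fun z hz => hz.1, fun z hz => ?_⟩
  obtain ⟨ε, hε, hball⟩ := Metric.eventually_nhds_iff.1 (eventually_nhdsWithin_iff.1 (h z hz.1))
  exact ⟨ε, hε, fun w hw hwz => le_of_not_gt fun hlt => hw.2 (hball hlt hwz)⟩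

theorem apply_zpow_mul_eq_of_apply_mul_eq {G α : Type*} [CommGroupWithZero G] {f : G → α} {u z : G}
    (hu : u ≠ 0) (h : ∀ k : ℤ, f (u * (u ^ k * z)) = f (u ^ k * z)) (k : ℤ) :
    f (u ^ k * z) = f z := by
  have hper : Function.Periodic (fun k : ℤ => f (u ^ k * z)) 1 := fun k => by
    simp only [zpow_add_one₀ hu, mul_comm _ u, mul_assoc, h]
  simpa using hper.int_mul_eq k

theorem apply_zpow_mul_zpow_mul_eq {G α : Type*} [CommGroupWithZero G] {f : G → α}
    {p r z : G} {E : Set G} (hp : p ≠ 0) (hr : r ≠ 0)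
    (hpE : ∀ y ∉ E, f (p * y) = f y) (hrE : ∀ y ∉ E, f (r * y) = f y)
    (hz : ∀ m n : ℤ, p ^ m * (r ^ n * z) ∉ E) (m n : ℤ) :
    f (p ^ m * (r ^ n * z)) = f z :=
  (apply_zpow_mul_eq_of_apply_mul_eq hp (fun k => hpE _ (hz k n)) m).trans
    (apply_zpow_mul_eq_of_apply_mul_eq hr (fun k => hrE _ (by simpa using hz 0 k)) n)

theorem exists_forall_zpow_mul_zpow_mul_notMem {𝕜 : Type*} [NontriviallyNormedField 𝕜]
    [CompleteSpace 𝕜] {p r : 𝕜} {E : Set 𝕜} (hp : p ≠ 0) (hr : r ≠ 0) (hE : E.Countable) :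
    ∃ z, ∀ m n : ℤ, p ^ m * (r ^ n * z) ∉ E := by
  have hB : (⋃ (m : ℤ) (n : ℤ), (fun z => p ^ m * (r ^ n * z)) ⁻¹' E).Countable :=
    Set.countable_iUnion fun m => Set.countable_iUnion fun n =>
      hE.preimage ((mul_right_injective₀ (zpow_ne_zero m hp)).comp
        (mul_right_injective₀ (zpow_ne_zero n hr)))
  obtain ⟨z, hz⟩ := (hB.dense_compl 𝕜).nonempty
  simp only [Set.mem_compl_iff, Set.mem_iUnion, Set.mem_preimage, not_exists] at hz
  exact ⟨z, hz⟩

theorem exists_norm_zpow_mul_mem_Ioc {𝕜 : Type*} [NormedDivisionRing 𝕜] {p x : 𝕜}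
    (hp0 : p ≠ 0) (hp1 : ‖p‖ < 1) (hx : x ≠ 0) : ∃ k : ℤ, ‖p ^ k * x‖ ∈ Set.Ioc ‖p‖ 1 := by
  have hp : 0 < ‖p‖ := norm_pos_iff.2 hp0
  obtain ⟨m, hm⟩ := exists_mem_Ioc_zpow (norm_pos_iff.2 hx) (one_lt_inv_iff₀.2 ⟨hp, hp1⟩)
  refine ⟨m + 1, ?_⟩
  rw [norm_mul, norm_zpow, Set.mem_Ioc, ← inv_inv (‖p‖ ^ (m + 1)), ← inv_zpow,
    ← div_eq_inv_mul, lt_div_iff₀ (by positivity), div_le_one (by positivity)]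
  constructor
  · calc ‖p‖ * ‖p‖⁻¹ ^ (m + 1) = ‖p‖⁻¹ ^ m := by
          rw [zpow_add_one₀ (inv_ne_zero hp.ne'), mul_comm, mul_assoc, inv_mul_cancel₀ hp.ne',
            mul_one]
      _ < ‖x‖ := hm.1
  · exact hm.2

theorem exists_accPt_zpow_mul_zpow_mul {𝕜 : Type*} [NormedField 𝕜] [ProperSpace 𝕜] {p r z : 𝕜}
    (hp0 : p ≠ 0) (hp1 : ‖p‖ < 1) (hr : r ≠ 0)
    (hpr : ∀ m n : ℤ, p ^ m = r ^ n → m = 0 ∧ n = 0) (hz : z ≠ 0) :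
    ∃ w ≠ 0, AccPt w (𝓟 {y | ∃ m n : ℤ, p ^ m * (r ^ n * z) = y}) := by
  choose k hk using fun n : ℤ =>
    exists_norm_zpow_mul_mem_Ioc hp0 hp1 (mul_ne_zero (zpow_ne_zero n hr) hz)
  have hinj : Function.Injective fun n => p ^ k n * (r ^ n * z) := by
    intro a b hab
    have : p ^ (k a - k b) = r ^ (b - a) := by
      rw [zpow_sub₀ hp0, zpow_sub₀ hr, div_eq_div_iff (zpow_ne_zero _ hp0) (zpow_ne_zero _ hr)]
      linear_combination mul_right_cancel₀ hz (by simpa only [← mul_assoc] using hab)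
    linarith [(hpr _ _ this).2]
  have hK : IsCompact (Metric.closedBall 0 1 ∩ {y : 𝕜 | ‖p‖ ≤ ‖y‖}) :=
    (isCompact_closedBall 0 1).inter_right (isClosed_le continuous_const continuous_norm)
  obtain ⟨w, hwK, hw⟩ := (Set.infinite_range_of_injective hinj).exists_accPt_of_subset_isCompact
    hK (Set.range_subset_iff.2 fun n => ⟨by simpa using (hk n).2, (hk n).1.le⟩)
  refine ⟨w, norm_pos_iff.1 ((norm_pos_iff.2 hp0).trans_le hwK.2), hw.mono (principal_mono.2 ?_)⟩
  rintro _ ⟨n, rfl⟩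
  exact ⟨k n, n, rfl⟩

theorem MeromorphicOn.eventually_eq_of_frequently_eq {𝕜 E : Type*} [NontriviallyNormedField 𝕜]
    [NormedAddCommGroup E] [NormedSpace 𝕜 E] {f : 𝕜 → E} {U : Set 𝕜} {c : E} {w z : 𝕜}
    (hf : MeromorphicOn f U) (hU : IsConnected U) (hw : w ∈ U)
    (hfreq : ∃ᶠ y in 𝓝[≠] w, f y = c) (hz : z ∈ U) : ∀ᶠ y in 𝓝[≠] z, f y = c := by
  have hg : MeromorphicOn (fun y => f y - c) U := hf.sub (MeromorphicOn.const c)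
  have hw_top : meromorphicOrderAt (fun y => f y - c) w = ⊤ :=
    meromorphicOrderAt_eq_top_iff.2 <| (hg w hw).frequently_zero_iff_eventuallyEq_zero.1 <|
      hfreq.mono fun y hy => sub_eq_zero.2 hy
  have hz_top : meromorphicOrderAt (fun y => f y - c) z = ⊤ := by
    by_contra hz_ne
    exact hg.meromorphicOrderAt_ne_top_of_isPreconnected hU.isPreconnected hz hw hz_ne hw_top
  exact (meromorphicOrderAt_eq_top_iff.1 hz_top).mono fun y hy => sub_eq_zero.1 hy

theorem elliptic_difference_constants_general
    (p r : ℂ) (hp0 : p ≠ 0) (hp1 : ‖p‖ < 1)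
    (hr0 : r ≠ 0)
    (hpr : ∀ m n : ℤ, p ^ m = r ^ n → m = 0 ∧ n = 0)
    (f : ℂ → ℂ) (hf : MeromorphicOn f {z : ℂ | z ≠ 0})
    (hfp : ∃ S : Set ℂ, DiscreteIn S ∧ ∀ z : ℂ, z ≠ 0 → z ∉ S → f (p * z) = f z)
    (hfr : ∃ S : Set ℂ, DiscreteIn S ∧ ∀ z : ℂ, z ≠ 0 → z ∉ S → f (r * z) = f z) :
    ∃ (c : ℂ) (S : Set ℂ), DiscreteIn S ∧ ∀ z : ℂ, z ≠ 0 → z ∉ S → f z = c := by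
  obtain ⟨S₁, hS₁, hfp⟩ := hfp
  obtain ⟨S₂, hS₂, hfr⟩ := hfr
  have hE : ({0} ∪ S₁ ∪ S₂).Countable :=
    ((Set.countable_singleton 0).union hS₁.countable).union hS₂.countable
  obtain ⟨z₀, hz₀⟩ := exists_forall_zpow_mul_zpow_mul_notMem hp0 hr0 hE
  have horbit : ∀ m n : ℤ, f (p ^ m * (r ^ n * z₀)) = f z₀ :=
    apply_zpow_mul_zpow_mul_eq hp0 hr0
      (fun y hy => hfp y (fun h => hy (.inl (.inl h))) fun h => hy (.inl (.inr h)))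
      (fun y hy => hfr y (fun h => hy (.inl (.inl h))) fun h => hy (.inr h)) hz₀
  have hz₀0 : z₀ ≠ 0 := fun h => hz₀ 0 0 (.inl (.inl (by simp [h])))
  obtain ⟨w, hw0, hacc⟩ := exists_accPt_zpow_mul_zpow_mul hp0 hp1 hr0 hpr hz₀0
  have hfreq : ∃ᶠ y in 𝓝[≠] w, f y = f z₀ := by
    refine (accPt_iff_frequently_nhdsNE.1 hacc).mono ?_
    rintro _ ⟨m, n, rfl⟩
    exact horbit m n
  have hconn : IsConnected {z : ℂ | z ≠ 0} :=
    isConnected_compl_singleton_of_one_lt_rank (by simp) 0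
  refine ⟨f z₀, _, discreteIn_setOf_ne_of_eventually_eq fun z hz =>
    hf.eventually_eq_of_frequently_eq hconn hw0 hfreq hz, fun z hz hzS => ?_⟩
  by_contra hne
  exact hzS ⟨hz, hne⟩

/-- A meromorphic function on `ℂ ∖ {0}` that is both `p`-periodic and `r`-periodic
(multiplicatively, off discrete sets), where `|p| < 1`, `|r| ≠ 1` and
`p^ℤ ∩ r^ℤ = {1}`, is constant off a discrete set.  This expresses that the field of
`σ`-constants of the difference field of `p`-elliptic meromorphic functions with
`σ(f)(z) = f(rz)` is `ℂ`. -/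
theorem elliptic_difference_constants
    (p r : ℂ) (hp0 : p ≠ 0) (hp1 : ‖p‖ < 1)
    (hr0 : r ≠ 0) (hr1 : ‖r‖ ≠ 1)
    (hpr : ∀ m n : ℤ, p ^ m = r ^ n → m = 0 ∧ n = 0)
    (f : ℂ → ℂ) (hf : MeromorphicOn f {z : ℂ | z ≠ 0})
    (hfp : ∃ S : Set ℂ, DiscreteIn S ∧ ∀ z : ℂ, z ≠ 0 → z ∉ S → f (p * z) = f z)
    (hfr : ∃ S : Set ℂ, DiscreteIn S ∧ ∀ z : ℂ, z ≠ 0 → z ∉ S → f (r * z) = f z) :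
    ∃ (c : ℂ) (S : Set ℂ), DiscreteIn S ∧ ∀ z : ℂ, z ≠ 0 → z ∉ S → f z = c :=
  elliptic_difference_constants_general p r hp0 hp1 hr0 hpr f hf hfp hfr
end
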